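/- Let q₁,…,q₈ ∈ ℝ³, not all equal, and suppose there exist λ ≠ 0 and c ∈ ℝ³ with Y_i(q) = λ q_i + c for i = 1,…,8, where Y is the hexahedron vector field. Then (q₁,…,q₈) is a cube: there exist r > 0, an orthogonal linear map R of ℝ³, and b ∈ ℝ³ such that q₁ = r·R(0,0,0)+b, q₂ = r·R(1,0,0)+b, q₃ = r·R(1,1,0)+b, q₄ = r·R(0,1,0)+b, q₅ = r·R(0,0,1)+b, q₆ = r·R(1,0,1)+b, q₇ = r·R(1,1,1)+b, q₈ = r·R(0,1,1)+b. -/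

import Mathlib

open scoped RealInnerProductSpace

noncomputable section

/-- Euclidean 3-space with the standard inner product. -/
abbrev E3 : Type := EuclideanSpace ℝ (Fin 3)

/-- The cross product on `ℝ³`. -/
def cross (a b : E3) : E3 :=
  WithLp.toLp 2 ![a 1 * b 2 - a 2 * b 1, a 2 * b 0 - a 0 * b 2, a 0 * b 1 - a 1 * b 0]

/-- `ν(a,b,c)` for a 3-cycle. -/
def nu3 (a b c : E3) : E3 := cross a b + cross b c + cross c a

/-- `ν(a,b,c,d)` for a 4-cycle. -/
def nu4 (a b c d : E3) : E3 := cross a b + cross b c + cross c d + cross d a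

/-- `ν(a,b,c,d,e)` for a 5-cycle. -/
def nu5 (a b c d e : E3) : E3 :=
  cross a b + cross b c + cross c d + cross d e + cross e a

/-- `ν(a,b,c,d,e,f)` for a 6-cycle. -/
def nu6 (a b c d e f : E3) : E3 :=
  cross a b + cross b c + cross c d + cross d e + cross e f + cross f a

/-- The signed volume of a tetrahedron. -/
def tvol (p₁ p₂ p₃ p₄ : E3) : ℝ :=
  (1 / 6) * ⟪cross (p₂ - p₁) (p₃ - p₁), p₄ - p₁⟫

/-- The point `(x, y, z)` of `ℝ³`. -/
def v3 (x y z : ℝ) : E3 := WithLp.toLp 2 ![x, y, z]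

/-!
The field `Y` is invariant under translations, so we may take `c = 0`. The identities
`Y₁ + Y₇ = Y₂ + Y₈ = Y₃ + Y₅ = Y₄ + Y₆ = 0` then make the configuration centrally symmetric, and a
centrally symmetric configuration has `Y₁ + Y₃ = Y₂ + Y₄`, so the face `q₁q₂q₃q₄` is a
parallelogram and the eight points are the vertices of a parallelepiped with edges `u, v, w` at
`q₁`. On a parallelepiped `Y₂ - Y₁ = 4 v × w`, and cyclically, so with `μ = λ / 4` we get
`μ u = v × w`, `μ v = w × u`, `μ w = u × v`. Hence `u, v, w` are pairwise orthogonal, and taking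
norms, `μ² ‖u‖² = ‖v‖² ‖w‖²` and cyclically, which forces `‖u‖ = ‖v‖ = ‖w‖`.
-/

lemma nu3_add_const (a b c t : E3) : nu3 (a + t) (b + t) (c + t) = nu3 a b c := by
  ext i; fin_cases i <;> simp [nu3, cross] <;> ring

lemma nu6_add_const (a b c d e f t : E3) :
    nu6 (a + t) (b + t) (c + t) (d + t) (e + t) (f + t) = nu6 a b c d e f := by
  ext i; fin_cases i <;> simp [nu6, cross] <;> ring

/-- Indexed from `0`: the paper's `Yᵢ(q₁, …, q₈)` is `hexField ![q₁, …, q₈] (i - 1)`. -/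
def hexField (q : Fin 8 → E3) : Fin 8 → E3 := ![
  (1 / 2 : ℝ) • (nu3 (q 2) (q 5) (q 7) + nu3 (q 1) (q 4) (q 3) +
    nu6 (q 5) (q 4) (q 7) (q 3) (q 2) (q 1)),
  (1 / 2 : ℝ) • (nu3 (q 3) (q 6) (q 4) + nu3 (q 2) (q 5) (q 0) +
    nu6 (q 6) (q 5) (q 4) (q 0) (q 3) (q 2)),
  (1 / 2 : ℝ) • (nu3 (q 0) (q 7) (q 5) + nu3 (q 3) (q 6) (q 1) +
    nu6 (q 7) (q 6) (q 5) (q 1) (q 0) (q 3)),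
  (1 / 2 : ℝ) • (nu3 (q 1) (q 4) (q 6) + nu3 (q 0) (q 7) (q 2) +
    nu6 (q 4) (q 7) (q 6) (q 2) (q 1) (q 0)),
  (1 / 2 : ℝ) • (nu3 (q 1) (q 6) (q 3) + nu3 (q 0) (q 5) (q 7) +
    nu6 (q 5) (q 6) (q 7) (q 3) (q 0) (q 1)),
  (1 / 2 : ℝ) • (nu3 (q 2) (q 7) (q 0) + nu3 (q 1) (q 6) (q 4) +
    nu6 (q 6) (q 7) (q 4) (q 0) (q 1) (q 2)),
  (1 / 2 : ℝ) • (nu3 (q 3) (q 4) (q 1) + nu3 (q 2) (q 7) (q 5) +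
    nu6 (q 7) (q 4) (q 5) (q 1) (q 2) (q 3)),
  (1 / 2 : ℝ) • (nu3 (q 0) (q 5) (q 2) + nu3 (q 3) (q 4) (q 6) +
    nu6 (q 4) (q 5) (q 6) (q 2) (q 3) (q 0))]

lemma hexField_add_const (q : Fin 8 → E3) (t : E3) :
    hexField (fun i => q i + t) = hexField q := by
  funext i; fin_cases i <;> simp only [hexField, nu3_add_const, nu6_add_const]

lemma hexField_add_hexField_antipode (q : Fin 8 → E3) :
    hexField q 0 + hexField q 6 = 0 ∧ hexField q 1 + hexField q 7 = 0 ∧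
      hexField q 2 + hexField q 4 = 0 ∧ hexField q 3 + hexField q 5 = 0 := by
  refine ⟨?_, ?_, ?_, ?_⟩ <;> ext i <;> fin_cases i <;> simp [hexField, nu3, nu6, cross] <;> ring

lemma hexField_add_of_centrallySymmetric {q : Fin 8 → E3} (h4 : q 4 = -q 2) (h5 : q 5 = -q 3)
    (h6 : q 6 = -q 0) (h7 : q 7 = -q 1) :
    hexField q 0 + hexField q 2 = hexField q 1 + hexField q 3 := by
  ext i; fin_cases i <;> simp [hexField, nu3, nu6, cross, h4, h5, h6, h7] <;> ring

def parallelepipedVertices (o u v w : E3) : Fin 8 → E3 :=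
  ![o, o + u, o + u + v, o + v, o + w, o + u + w, o + u + v + w, o + v + w]

lemma parallelepipedVertices_add_const (o u v w t : E3) (i : Fin 8) :
    parallelepipedVertices (o + t) u v w i = parallelepipedVertices o u v w i + t := by
  fin_cases i <;> simp [parallelepipedVertices] <;> abel

lemma hexField_parallelepipedVertices_sub (o u v w : E3) :
    hexField (parallelepipedVertices o u v w) 1 - hexField (parallelepipedVertices o u v w) 0 =
        (4 : ℝ) • cross v w ∧
      hexField (parallelepipedVertices o u v w) 3 - hexField (parallelepipedVertices o u v w) 0 =
        (4 : ℝ) • cross w u ∧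
      hexField (parallelepipedVertices o u v w) 4 - hexField (parallelepipedVertices o u v w) 0 =
        (4 : ℝ) • cross u v := by
  refine ⟨?_, ?_, ?_⟩ <;> ext i <;> fin_cases i <;>
    simp [parallelepipedVertices, hexField, nu3, nu6, cross] <;> ring

theorem eq_parallelepipedVertices_of_hexField_eq_smul {q : Fin 8 → E3} {lam : ℝ} (hlam : lam ≠ 0)
    (hq : ∀ i, hexField q i = lam • q i) :
    q = parallelepipedVertices (q 0) (q 1 - q 0) (q 3 - q 0) (q 4 - q 0) := by
  have antipode : ∀ {x y : E3}, lam • x + lam • y = 0 → y = -x := fun h =>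
    eq_neg_of_add_eq_zero_right ((smul_eq_zero.mp ((smul_add lam _ _).trans h)).resolve_left hlam)
  obtain ⟨h06, h17, h24, h35⟩ := hexField_add_hexField_antipode q
  simp only [hq] at h06 h17 h24 h35
  have hface : q 2 = q 1 + q 3 - q 0 := by
    have h := hexField_add_of_centrallySymmetric (antipode h24) (antipode h35) (antipode h06)
      (antipode h17)
    rw [hq, hq, hq, hq, ← smul_add, ← smul_add] at h
    rw [eq_sub_iff_add_eq, add_comm, smul_right_injective E3 hlam h]
  funext i
  fin_cases i <;>
    simp [parallelepipedVertices, hface, antipode h06, antipode h17, antipode h24, antipode h35] <;>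
    abel

theorem exists_parallelepipedVertices_of_hexField_eq_smul_add {q : Fin 8 → E3} {lam : ℝ} {c : E3}
    (hlam : lam ≠ 0) (hq : ∀ i, hexField q i = lam • q i + c) :
    ∃ u v w : E3, q = parallelepipedVertices (q 0) u v w ∧ (lam / 4) • u = cross v w ∧
      (lam / 4) • v = cross w u ∧ (lam / 4) • w = cross u v := by
  set p : Fin 8 → E3 := fun i => q i + lam⁻¹ • c
  have hp : ∀ i, hexField p i = lam • p i := fun i => by
    rw [hexField_add_const, hq, smul_add, smul_smul, mul_inv_cancel₀ hlam, one_smul]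
  have hpar := eq_parallelepipedVertices_of_hexField_eq_smul hlam hp
  obtain ⟨hu, hv, hw⟩ :=
    hexField_parallelepipedVertices_sub (p 0) (p 1 - p 0) (p 3 - p 0) (p 4 - p 0)
  rw [← hpar] at hu hv hw
  simp only [hp, ← smul_sub] at hu hv hw
  refine ⟨p 1 - p 0, p 3 - p 0, p 4 - p 0, funext fun i => ?_, ?_, ?_, ?_⟩
  · exact add_right_cancel ((congrFun hpar i).trans (parallelepipedVertices_add_const ..))
  · linear_combination (norm := module) (1 / 4 : ℝ) • hu
  · linear_combination (norm := module) (1 / 4 : ℝ) • hv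
  · linear_combination (norm := module) (1 / 4 : ℝ) • hw

lemma inner_self_cross_left (a b : E3) : ⟪a, cross a b⟫ = 0 := by
  simp [cross, PiLp.inner_apply, Fin.sum_univ_three]; ring

lemma inner_self_cross_right (a b : E3) : ⟪b, cross a b⟫ = 0 := by
  simp [cross, PiLp.inner_apply, Fin.sum_univ_three]; ring

lemma norm_cross_sq (a b : E3) : ‖cross a b‖ ^ 2 = ‖a‖ ^ 2 * ‖b‖ ^ 2 - ⟪a, b⟫ ^ 2 := by
  simp [EuclideanSpace.real_norm_sq_eq, cross, PiLp.inner_apply, Fin.sum_univ_three]; ring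

lemma inner_eq_zero_of_smul_eq_cross {μ : ℝ} (hμ : μ ≠ 0) {x y z : E3} (h : μ • x = cross y z) :
    ⟪y, x⟫ = 0 ∧ ⟪z, x⟫ = 0 := by
  constructor <;> refine (mul_eq_zero.mp ?_).resolve_left hμ
  · rw [← real_inner_smul_right, h, inner_self_cross_left]
  · rw [← real_inner_smul_right, h, inner_self_cross_right]

lemma sq_mul_norm_sq_of_smul_eq_cross {μ : ℝ} {x y z : E3} (h : μ • x = cross y z)
    (hyz : ⟪y, z⟫ = 0) : μ ^ 2 * ‖x‖ ^ 2 = ‖y‖ ^ 2 * ‖z‖ ^ 2 := by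
  calc μ ^ 2 * ‖x‖ ^ 2 = ‖μ • x‖ ^ 2 := by rw [norm_smul, mul_pow, Real.norm_eq_abs, sq_abs]
    _ = ‖y‖ ^ 2 * ‖z‖ ^ 2 := by rw [h, norm_cross_sq, hyz]; ring

theorem orthogonal_and_norm_eq_of_smul_eq_cross {μ : ℝ} (hμ : μ ≠ 0) {u v w : E3}
    (hu : μ • u = cross v w) (hv : μ • v = cross w u) (hw : μ • w = cross u v) :
    ⟪u, v⟫ = 0 ∧ ⟪v, w⟫ = 0 ∧ ⟪w, u⟫ = 0 ∧ ‖v‖ = ‖u‖ ∧ ‖w‖ = ‖u‖ := by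
  obtain ⟨hvu, hwu⟩ := inner_eq_zero_of_smul_eq_cross hμ hu
  obtain ⟨hwv, huv⟩ := inner_eq_zero_of_smul_eq_cross hμ hv
  have hU := sq_mul_norm_sq_of_smul_eq_cross hu (real_inner_comm v w ▸ hwv)
  have hV := sq_mul_norm_sq_of_smul_eq_cross hv hwu
  have hW := sq_mul_norm_sq_of_smul_eq_cross hw huv
  have hUV : ‖v‖ ^ 2 = ‖u‖ ^ 2 := by
    have : (‖u‖ ^ 2 - ‖v‖ ^ 2) * (μ ^ 2 + ‖w‖ ^ 2) = 0 := by linear_combination hU - hV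
    linarith [(mul_eq_zero.mp this).resolve_right (by positivity)]
  have hVW : ‖w‖ ^ 2 = ‖v‖ ^ 2 := by
    have : (‖v‖ ^ 2 - ‖w‖ ^ 2) * (μ ^ 2 + ‖u‖ ^ 2) = 0 := by linear_combination hV - hW
    linarith [(mul_eq_zero.mp this).resolve_right (by positivity)]
  refine ⟨huv, real_inner_comm v w ▸ hwv, hwu, ?_, ?_⟩
  · exact (pow_left_inj₀ (norm_nonneg _) (norm_nonneg _) two_ne_zero).mp hUV
  · exact (pow_left_inj₀ (norm_nonneg _) (norm_nonneg _) two_ne_zero).mp (hVW.trans hUV)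

lemma v3_eq_sum_single (x y z : ℝ) :
    v3 x y z = x • EuclideanSpace.single 0 1 + y • EuclideanSpace.single 1 1 +
      z • EuclideanSpace.single 2 1 := by
  ext i; fin_cases i <;> simp [v3]

theorem exists_linearIsometryEquiv_of_orthogonal {u v w : E3} (hu : u ≠ 0) (huv : ⟪u, v⟫ = 0)
    (hvw : ⟪v, w⟫ = 0) (hwu : ⟪w, u⟫ = 0) (hv : ‖v‖ = ‖u‖) (hw : ‖w‖ = ‖u‖) :
    ∃ R : E3 ≃ₗᵢ[ℝ] E3, ∀ x y z : ℝ, ‖u‖ • R (v3 x y z) = x • u + y • v + z • w := by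
  have hr : ‖u‖ ≠ 0 := norm_ne_zero_iff.mpr hu
  let f : Fin 3 → E3 := ![‖u‖⁻¹ • u, ‖u‖⁻¹ • v, ‖u‖⁻¹ • w]
  have hf : Orthonormal ℝ f := by
    rw [orthonormal_iff_ite]
    intro i j
    fin_cases i <;> fin_cases j <;>
      simp [f, real_inner_smul_left, real_inner_smul_right, norm_smul, hv, hw, huv, hvw, hwu,
        real_inner_comm u v, real_inner_comm v w, real_inner_comm w u, hr]
  let b := OrthonormalBasis.mk hf (hf.linearIndependent.span_eq_top_of_card_eq_finrank (by simp)).ge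
  refine ⟨b.repr.symm, fun x y z => ?_⟩
  simp [v3_eq_sum_single, b, f, smul_smul, mul_comm x, mul_comm y, mul_comm z, hr]

theorem exists_linearIsometryEquiv_of_smul_eq_cross {μ : ℝ} (hμ : μ ≠ 0) {u v w : E3}
    (hu : μ • u = cross v w) (hv : μ • v = cross w u) (hw : μ • w = cross u v)
    (h0 : ¬(u = 0 ∧ v = 0 ∧ w = 0)) :
    ∃ r : ℝ, 0 < r ∧ ∃ R : E3 ≃ₗᵢ[ℝ] E3, ∀ x y z : ℝ, x • u + y • v + z • w = r • R (v3 x y z) := by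
  obtain ⟨huv, hvw, hwu, hvn, hwn⟩ := orthogonal_and_norm_eq_of_smul_eq_cross hμ hu hv hw
  have hu0 : u ≠ 0 := fun hu0 => h0 ⟨hu0, by
    simpa [hu0] using hvn, by simpa [hu0] using hwn⟩
  obtain ⟨R, hR⟩ := exists_linearIsometryEquiv_of_orthogonal hu0 huv hvw hwu hvn hwn
  exact ⟨‖u‖, norm_pos_iff.mpr hu0, R, fun x y z => (hR x y z).symm⟩

theorem optimal_hexahedron_is_cube (q₁ q₂ q₃ q₄ q₅ q₆ q₇ q₈ : E3)
    (hne : ¬ (q₁ = q₂ ∧ q₁ = q₃ ∧ q₁ = q₄ ∧ q₁ = q₅ ∧ q₁ = q₆ ∧ q₁ = q₇ ∧ q₁ = q₈))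
    (lam : ℝ) (hlam : lam ≠ 0) (c : E3)
    (h₁ : (1 / 2 : ℝ) • (nu3 q₃ q₆ q₈ + nu3 q₂ q₅ q₄ + nu6 q₆ q₅ q₈ q₄ q₃ q₂) = lam • q₁ + c)
    (h₂ : (1 / 2 : ℝ) • (nu3 q₄ q₇ q₅ + nu3 q₃ q₆ q₁ + nu6 q₇ q₆ q₅ q₁ q₄ q₃) = lam • q₂ + c)
    (h₃ : (1 / 2 : ℝ) • (nu3 q₁ q₈ q₆ + nu3 q₄ q₇ q₂ + nu6 q₈ q₇ q₆ q₂ q₁ q₄) = lam • q₃ + c)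
    (h₄ : (1 / 2 : ℝ) • (nu3 q₂ q₅ q₇ + nu3 q₁ q₈ q₃ + nu6 q₅ q₈ q₇ q₃ q₂ q₁) = lam • q₄ + c)
    (h₅ : (1 / 2 : ℝ) • (nu3 q₂ q₇ q₄ + nu3 q₁ q₆ q₈ + nu6 q₆ q₇ q₈ q₄ q₁ q₂) = lam • q₅ + c)
    (h₆ : (1 / 2 : ℝ) • (nu3 q₃ q₈ q₁ + nu3 q₂ q₇ q₅ + nu6 q₇ q₈ q₅ q₁ q₂ q₃) = lam • q₆ + c)
    (h₇ : (1 / 2 : ℝ) • (nu3 q₄ q₅ q₂ + nu3 q₃ q₈ q₆ + nu6 q₈ q₅ q₆ q₂ q₃ q₄) = lam • q₇ + c)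
    (h₈ : (1 / 2 : ℝ) • (nu3 q₁ q₆ q₃ + nu3 q₄ q₅ q₇ + nu6 q₅ q₆ q₇ q₃ q₄ q₁) = lam • q₈ + c) :
    ∃ (r : ℝ) (_ : 0 < r) (R : E3 ≃ₗᵢ[ℝ] E3) (b : E3),
      q₁ = r • R (v3 0 0 0) + b ∧
      q₂ = r • R (v3 1 0 0) + b ∧
      q₃ = r • R (v3 1 1 0) + b ∧
      q₄ = r • R (v3 0 1 0) + b ∧
      q₅ = r • R (v3 0 0 1) + b ∧
      q₆ = r • R (v3 1 0 1) + b ∧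
      q₇ = r • R (v3 1 1 1) + b ∧
      q₈ = r • R (v3 0 1 1) + b := by
  let q : Fin 8 → E3 := ![q₁, q₂, q₃, q₄, q₅, q₆, q₇, q₈]
  obtain ⟨u, v, w, hq, hu, hv, hw⟩ := exists_parallelepipedVertices_of_hexField_eq_smul_add
    (q := q) hlam fun i => by fin_cases i; exacts [h₁, h₂, h₃, h₄, h₅, h₆, h₇, h₈]
  have hvertex : ∀ i, q i = parallelepipedVertices q₁ u v w i := fun i => congrFun hq i
  have hnondeg : ¬(u = 0 ∧ v = 0 ∧ w = 0) := by
    rintro ⟨rfl, rfl, rfl⟩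
    simp only [parallelepipedVertices, add_zero] at hvertex
    exact hne ⟨(hvertex 1).symm, (hvertex 2).symm, (hvertex 3).symm, (hvertex 4).symm,
      (hvertex 5).symm, (hvertex 6).symm, (hvertex 7).symm⟩
  obtain ⟨r, hr, R, hR⟩ :=
    exists_linearIsometryEquiv_of_smul_eq_cross (div_ne_zero hlam four_ne_zero) hu hv hw hnondeg
  refine ⟨r, hr, R, q₁, (hvertex 0).trans ?_, (hvertex 1).trans ?_, (hvertex 2).trans ?_,
    (hvertex 3).trans ?_, (hvertex 4).trans ?_, (hvertex 5).trans ?_, (hvertex 6).trans ?_,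
    (hvertex 7).trans ?_⟩ <;>
  simp [parallelepipedVertices, ← hR] <;> abel
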